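/- Let (Ω, P) be a probability space, d ≥ 1, T a finite index set with a distinguished element k, α ∈ [0,1], B ≥ 0, and p : T∖{k} → ℝ nonnegative weights with Σ_{t≠k} p_t = 1. Let μ : T → ℝ^d be vectors, u ∈ ℝ^d a unit vector, and δ : T∖{k} → ℝ nonnegative scalars with μ_t − μ_k = δ_t·u for all t ≠ k. Let e : T → (Ω → ℝ^d) be square-integrable random vectors with E[e_t] = 0 for all t, E⟨e_t, e_s⟩ = 0 for all t ≠ s, and E‖e_t‖² = B² for all t. Define the propagated estimator μ̂ := α·(μ_k + e_k) + (1−α)·Σ_{t≠k} p_t·(μ_t + e_t). Then E‖μ̂ − μ_k‖² = B²·(α² + (1−α)²·Σ_{t≠k} p_t²) + (1−α)²·(Σ_{t≠k} p_t δ_t)². -/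

import Mathlib

open MeasureTheory Finset

lemma aux_integrable_inner {Ω : Type*} [MeasurableSpace Ω] {P : Measure Ω}
    {E : Type*} [NormedAddCommGroup E] [InnerProductSpace ℝ E]
    {f g : Ω → E} (hf : MemLp f 2 P) (hg : MemLp g 2 P) :
    Integrable (fun ω => (inner ℝ (f ω) (g ω) : ℝ)) P := by
  have h1 : Integrable (fun ω => ‖f ω‖ ^ 2) P := (memLp_two_iff_integrable_sq_norm hf.1).mp hf
  have h2 : Integrable (fun ω => ‖g ω‖ ^ 2) P := (memLp_two_iff_integrable_sq_norm hg.1).mp hg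
  refine ((h1.add h2).const_mul (1/2 : ℝ)).mono' (hf.1.inner hg.1) ?_
  filter_upwards with ω
  have h3 := abs_real_inner_le_norm (f ω) (g ω)
  simp only [Pi.add_apply]
  rw [Real.norm_eq_abs]
  nlinarith [norm_nonneg (f ω), norm_nonneg (g ω), sq_nonneg (‖f ω‖ - ‖g ω‖)]

/-- **exact MSE of residual GoG propagation, Eqs. (37)–(38).**
Under the one-factor hop-mismatch model `μ_t − μ_k = δ_t • u` and zero-mean,
pairwise-orthogonal, equal-second-moment noises, the propagated estimator
`μ̂ = α (μ_k + e_k) + (1−α) ∑_{t≠k} p_t (μ_t + e_t)` satisfies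
`E‖μ̂ − μ_k‖² = B² (α² + (1−α)² ∑ p_t²) + (1−α)² (∑ p_t δ_t)²`. -/
theorem residual_gog_propagation_mse
    (Ω : Type*) [MeasurableSpace Ω] (P : Measure Ω) [IsProbabilityMeasure P]
    (d : ℕ) (hd : 1 ≤ d) (T : Type*) [Fintype T] [DecidableEq T] (k : T)
    (α : ℝ) (hα0 : 0 ≤ α) (hα1 : α ≤ 1) (B : ℝ) (hB : 0 ≤ B)
    (p : T → ℝ) (hp : ∀ t, t ≠ k → 0 ≤ p t)
    (hpsum : ∑ t ∈ Finset.univ.erase k, p t = 1)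
    (μ : T → EuclideanSpace ℝ (Fin d))
    (u : EuclideanSpace ℝ (Fin d)) (hu : ‖u‖ = 1)
    (δ : T → ℝ) (hδ : ∀ t, t ≠ k → 0 ≤ δ t)
    (hmismatch : ∀ t, t ≠ k → μ t - μ k = δ t • u)
    (e : T → Ω → EuclideanSpace ℝ (Fin d))
    (hL2 : ∀ t, MemLp (e t) 2 P)
    (hmean : ∀ t, ∫ ω, e t ω ∂P = 0)
    (horth : ∀ t s : T, t ≠ s → ∫ ω, (inner ℝ (e t ω) (e s ω) : ℝ) ∂P = 0)
    (hvar : ∀ t, ∫ ω, ‖e t ω‖ ^ 2 ∂P = B ^ 2) :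
    ∫ ω, ‖(α • (μ k + e k ω)
            + (1 - α) • ∑ t ∈ Finset.univ.erase k, p t • (μ t + e t ω)) - μ k‖ ^ 2 ∂P
      = B ^ 2 * (α ^ 2 + (1 - α) ^ 2 * ∑ t ∈ Finset.univ.erase k, (p t) ^ 2)
        + (1 - α) ^ 2 * (∑ t ∈ Finset.univ.erase k, p t * δ t) ^ 2 := by
  classical
  set S : Finset T := Finset.univ.erase k with hS
  set q : T → ℝ := fun t => if t = k then α else (1 - α) * p t with hq
  set r : ℝ := (1 - α) * ∑ t ∈ S, p t * δ t with hr
  set c : EuclideanSpace ℝ (Fin d) := r • u with hc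
  set Y : Ω → EuclideanSpace ℝ (Fin d) := fun ω => ∑ t : T, q t • e t ω with hY
  -- pointwise identity
  have key : ∀ ω, (α • (μ k + e k ω)
      + (1 - α) • ∑ t ∈ S, p t • (μ t + e t ω)) - μ k = Y ω + c := by
    intro ω
    have h1 : ∑ t ∈ S, p t • (μ t + e t ω)
        = (∑ t ∈ S, p t • μ t) + ∑ t ∈ S, p t • e t ω := by
      rw [← Finset.sum_add_distrib]
      exact Finset.sum_congr rfl fun t _ => smul_add _ _ _
    have h2 : ∑ t ∈ S, p t • μ t = (∑ t ∈ S, p t * δ t) • u + μ k := by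
      have hterm : ∀ t ∈ S, p t • μ t = (p t * δ t) • u + p t • μ k := by
        intro t ht
        have htk : t ≠ k := Finset.ne_of_mem_erase ht
        have hμ : μ t = δ t • u + μ k := by
          rw [← hmismatch t htk]; abel
        rw [hμ, smul_add, smul_smul]
      rw [Finset.sum_congr rfl hterm, Finset.sum_add_distrib, ← Finset.sum_smul,
        ← Finset.sum_smul, hpsum, one_smul]
    have h3 : Y ω = α • e k ω + (1 - α) • ∑ t ∈ S, p t • e t ω := by
      rw [hY]
      simp only
      rw [← Finset.sum_erase_add _ _ (Finset.mem_univ k), ← hS]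
      have : ∑ t ∈ S, q t • e t ω = ∑ t ∈ S, (1 - α) • (p t • e t ω) := by
        refine Finset.sum_congr rfl fun t ht => ?_
        rw [hq]
        simp only
        rw [if_neg (Finset.ne_of_mem_erase ht), mul_smul]
      rw [this, ← Finset.smul_sum, hq]
      simp only [if_pos rfl]
      abel
    rw [h1, h2, h3, hc, hr, mul_smul]
    generalize e k ω = a
    generalize (∑ t ∈ S, p t • e t ω) = b
    generalize (∑ t ∈ S, p t * δ t) • u = w
    module
  simp only [key]
  -- integrability facts
  have hInt_inner : ∀ t s : T, Integrable (fun ω => (inner ℝ (e t ω) (e s ω) : ℝ)) P :=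
    fun t s => aux_integrable_inner (hL2 t) (hL2 s)
  have hInt_e : ∀ t, Integrable (e t) P := fun t => (hL2 t).integrable one_le_two
  have hYmem : MemLp Y 2 P := by
    have h := memLp_finset_sum' (μ := P) Finset.univ (fun t _ => ((hL2 t).const_smul (q t)))
    have heq : (∑ t : T, q t • e t) = Y := by
      funext ω
      rw [hY, Finset.sum_apply]
      rfl
    rwa [heq] at h
  have hY_int : Integrable Y P := hYmem.integrable one_le_two
  have hYsq : Integrable (fun ω => ‖Y ω‖ ^ 2) P :=
    (memLp_two_iff_integrable_sq_norm hYmem.1).mp hYmem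
  -- expand the square
  have hexp : ∀ ω, ‖Y ω + c‖ ^ 2 = ‖Y ω‖ ^ 2 + 2 * (inner ℝ (Y ω) c : ℝ) + ‖c‖ ^ 2 :=
    fun ω => norm_add_sq_real _ _
  simp only [hexp]
  have hInt2 : Integrable (fun ω => 2 * (inner ℝ (Y ω) c : ℝ)) P :=
    (hY_int.inner_const c).const_mul 2
  have haddInt : Integrable (fun ω => ‖Y ω‖ ^ 2 + 2 * (inner ℝ (Y ω) c : ℝ)) P := hYsq.add hInt2
  rw [integral_add haddInt (integrable_const _), integral_add hYsq hInt2,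
    integral_const_mul, integral_const]
  -- mean of Y is zero
  have hEY : ∫ ω, Y ω ∂P = 0 := by
    have h := integral_finset_sum (μ := P) Finset.univ
      (f := fun t ω => q t • e t ω) (fun t _ => (hInt_e t).smul (q t))
    simp only [hY]
    rw [h]
    simp only [integral_smul, hmean, smul_zero, Finset.sum_const_zero]
  have hcross : ∫ ω, (inner ℝ (Y ω) c : ℝ) ∂P = 0 := by
    have hcomm : ∀ ω, (inner ℝ (Y ω) c : ℝ) = inner ℝ c (Y ω) := fun ω => real_inner_comm _ _
    simp_rw [hcomm]
    rw [integral_inner hY_int c, hEY, inner_zero_right]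
  -- variance of Y
  have hYnorm : ∫ ω, ‖Y ω‖ ^ 2 ∂P = ∑ t : T, q t * (q t * B ^ 2) := by
    have hpt : ∀ ω, ‖Y ω‖ ^ 2
        = ∑ t : T, ∑ s : T, q t * (q s * (inner ℝ (e t ω) (e s ω) : ℝ)) := by
      intro ω
      rw [hY]
      simp only
      rw [← real_inner_self_eq_norm_sq, sum_inner]
      refine Finset.sum_congr rfl fun t _ => ?_
      rw [inner_sum]
      refine Finset.sum_congr rfl fun s _ => ?_
      rw [real_inner_smul_left, real_inner_smul_right]
    simp only [hpt]
    rw [integral_finset_sum _ (fun t _ => integrable_finset_sum _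
      (fun s _ => ((hInt_inner t s).const_mul (q s)).const_mul (q t)))]
    refine Finset.sum_congr rfl fun t _ => ?_
    rw [integral_finset_sum _ (fun s _ => ((hInt_inner t s).const_mul (q s)).const_mul (q t))]
    rw [Finset.sum_eq_single t]
    · rw [integral_const_mul, integral_const_mul]
      congr 2
      simp_rw [real_inner_self_eq_norm_sq]
      exact hvar t
    · intro s _ hst
      rw [integral_const_mul, integral_const_mul, horth t s (Ne.symm hst), mul_zero, mul_zero]
    · intro h
      exact absurd (Finset.mem_univ t) h
  rw [hYnorm, hcross, mul_zero, add_zero]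
  -- norm of c
  have hcnorm : ‖c‖ ^ 2 = (1 - α) ^ 2 * (∑ t ∈ S, p t * δ t) ^ 2 := by
    rw [hc, norm_smul, hu, mul_one, Real.norm_eq_abs, sq_abs, hr, mul_pow]
  -- split the q-sum
  have hqsum : ∑ t : T, q t * (q t * B ^ 2)
      = B ^ 2 * (α ^ 2 + (1 - α) ^ 2 * ∑ t ∈ S, (p t) ^ 2) := by
    rw [← Finset.sum_erase_add _ _ (Finset.mem_univ k), ← hS]
    have h1 : ∑ t ∈ S, q t * (q t * B ^ 2) = ∑ t ∈ S, B ^ 2 * ((1 - α) ^ 2 * (p t) ^ 2) := by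
      refine Finset.sum_congr rfl fun t ht => ?_
      rw [hq]
      simp only
      rw [if_neg (Finset.ne_of_mem_erase ht)]
      ring
    have hqk : q k = α := by rw [hq]; simp
    rw [h1, hqk, ← Finset.mul_sum, ← Finset.mul_sum]
    ring
  rw [hqsum, hcnorm]
  simp
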